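/- arXiv:0901.1288 — 2 statements merged into one kernel-verified Lean document; each statement's English description precedes it below -/
import Mathlib

section
/- Let $m,n$ be positive integers with $mn>1$ and define $d_j$ by $d_0=0$, $d_j=mn(1+d_{j-1})$. For $K\ge 3$, the quantity $\max_{0=q_0< q_1<\cdots<q_{K-1},\ q_j\le 1+d_j}\ \min_{1\le i\le K-1}\big(mn(q_i-q_{i-1})+d_i\big)$ equals $mn(mn+2)$, achieved at $q_i=1+d_i$; moreover this value is already attained for $K=3$ and does not increase for larger $K$. -/
/-- Limit of power-controlled feedback diversity at zero multiplexing: for `mn > 1`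
and any `K ≥ 3`, the max over feedback power exponents `0 = q₀ < q₁ < ⋯ < q_{K-1}`,
`qⱼ ≤ 1 + dⱼ`, of `min_{1 ≤ i ≤ K-1} (mn(qᵢ - q_{i-1}) + dᵢ)` equals `mn(mn+2)`,
achieved at `qᵢ = 1 + dᵢ`. -/
theorem stmt6 (m n : ℕ) (hmn : 1 < m * n) (d : ℕ → ℝ)
    (hd0 : d 0 = 0) (hrec : ∀ j : ℕ, d (j + 1) = ((m * n : ℕ) : ℝ) * (1 + d j))
    (K : ℕ) (hK : 3 ≤ K) :
    sSup { v : ℝ | ∃ q : ℕ → ℝ, q 0 = 0 ∧ (∀ j : ℕ, j + 1 < K → q j < q (j + 1)) ∧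
        (∀ j : ℕ, j < K → q j ≤ 1 + d j) ∧
        v = sInf { w : ℝ | ∃ i : ℕ, 1 ≤ i ∧ i ≤ K - 1 ∧
          w = ((m * n : ℕ) : ℝ) * (q i - q (i - 1)) + d i } }
      = ((m * n : ℕ) : ℝ) * (((m * n : ℕ) : ℝ) + 2) ∧
    ((m * n : ℕ) : ℝ) * (((m * n : ℕ) : ℝ) + 2) ∈
      { v : ℝ | ∃ q : ℕ → ℝ, q 0 = 0 ∧ (∀ j : ℕ, j + 1 < K → q j < q (j + 1)) ∧
        (∀ j : ℕ, j < K → q j ≤ 1 + d j) ∧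
        v = sInf { w : ℝ | ∃ i : ℕ, 1 ≤ i ∧ i ≤ K - 1 ∧
          w = ((m * n : ℕ) : ℝ) * (q i - q (i - 1)) + d i } } := by
  set N : ℝ := ((m * n : ℕ) : ℝ) with hNdef
  have hN2 : (2 : ℝ) ≤ N := by
    have h2 : (2 : ℕ) ≤ m * n := hmn
    show (2 : ℝ) ≤ ((m * n : ℕ) : ℝ)
    exact_mod_cast h2
  have hd1 : d 1 = N := by rw [hrec 0, hd0]; ring
  have hge : ∀ j, 1 ≤ j → N ≤ d j := by
    intro j hj
    induction j with
    | zero => omega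
    | succ k ih =>
      rw [hrec k]
      rcases Nat.eq_zero_or_pos k with h0 | hk
      · subst h0; rw [hd0]; nlinarith
      · have := ih hk; nlinarith
  -- the witness
  set q : ℕ → ℝ := fun i => if i = 0 then 0 else 1 + d i with hq
  have hq0 : q 0 = 0 := by simp [hq]
  have hqs : ∀ i, 1 ≤ i → q i = 1 + d i := by
    intro i hi
    show (if i = 0 then (0:ℝ) else 1 + d i) = 1 + d i
    rw [if_neg (by omega : ¬ i = 0)]
  -- membership of the target value, with sInf computed
  have hmem : (N * (N + 2)) ∈
      { v : ℝ | ∃ q : ℕ → ℝ, q 0 = 0 ∧ (∀ j : ℕ, j + 1 < K → q j < q (j + 1)) ∧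
        (∀ j : ℕ, j < K → q j ≤ 1 + d j) ∧
        v = sInf { w : ℝ | ∃ i : ℕ, 1 ≤ i ∧ i ≤ K - 1 ∧
          w = N * (q i - q (i - 1)) + d i } } := by
    refine ⟨q, hq0, ?_, ?_, ?_⟩
    · intro j hj
      rcases Nat.eq_zero_or_pos j with h0 | hjpos
      · subst h0
        rw [hq0, hqs 1 le_rfl, hd1]; linarith
      · rw [hqs j hjpos, hqs (j+1) (by omega), hrec j]
        have := hge j hjpos
        nlinarith
    · intro j hj
      rcases Nat.eq_zero_or_pos j with h0 | hjpos
      · subst h0; rw [hq0, hd0]; linarith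
      · rw [hqs j hjpos]
    · -- sInf of the inner set equals N(N+2)
      have hmemW : (N * (N + 2)) ∈ { w : ℝ | ∃ i : ℕ, 1 ≤ i ∧ i ≤ K - 1 ∧
          w = N * (q i - q (i - 1)) + d i } := by
        refine ⟨1, le_rfl, by omega, ?_⟩
        rw [hqs 1 le_rfl]
        simp only [Nat.sub_self]
        rw [hq0, hd1]; ring
      have hlb : ∀ w ∈ { w : ℝ | ∃ i : ℕ, 1 ≤ i ∧ i ≤ K - 1 ∧
          w = N * (q i - q (i - 1)) + d i }, N * (N + 2) ≤ w := by
        rintro w ⟨i, hi1, hiK, rfl⟩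
        rcases Nat.lt_or_ge i 2 with h2 | h2
        · have : i = 1 := by omega
          subst this
          rw [hqs 1 le_rfl]
          simp only [Nat.sub_self]
          rw [hq0, hd1]; nlinarith
        · obtain ⟨k, rfl⟩ : ∃ k, i = k + 1 := ⟨i - 1, by omega⟩
          have hk1 : 1 ≤ k := by omega
          rw [hqs (k+1) (by omega)]
          simp only [Nat.add_sub_cancel]
          rw [hqs k hk1, hrec k]
          have h1 := hge k hk1
          have hNn : (0:ℝ) ≤ N := by linarith
          have key : N ≤ N * N * d k := by nlinarith
          nlinarith
      exact le_antisymm (le_csInf ⟨_, hmemW⟩ hlb) (csInf_le ⟨_, hlb⟩ hmemW)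
  -- upper bound
  have hub : ∀ v ∈ { v : ℝ | ∃ q : ℕ → ℝ, q 0 = 0 ∧ (∀ j : ℕ, j + 1 < K → q j < q (j + 1)) ∧
        (∀ j : ℕ, j < K → q j ≤ 1 + d j) ∧
        v = sInf { w : ℝ | ∃ i : ℕ, 1 ≤ i ∧ i ≤ K - 1 ∧
          w = N * (q i - q (i - 1)) + d i } }, v ≤ N * (N + 2) := by
    rintro v ⟨p, hp0, hpmono, hple, rfl⟩
    set W := { w : ℝ | ∃ i : ℕ, 1 ≤ i ∧ i ≤ K - 1 ∧
          w = N * (p i - p (i - 1)) + d i } with hW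
    have hWfin : W.Finite := by
      apply Set.Finite.subset (Set.Finite.image (fun i => N * (p i - p (i - 1)) + d i)
        (Set.finite_Icc 1 (K - 1)))
      rintro w ⟨i, hi1, hiK, rfl⟩
      exact ⟨i, ⟨hi1, hiK⟩, rfl⟩
    have hmemW1 : (N * (p 1 - p 0) + d 1) ∈ W := ⟨1, le_rfl, by omega, rfl⟩
    have h1 : sInf W ≤ N * (p 1 - p 0) + d 1 := csInf_le hWfin.bddBelow hmemW1
    have hp1 : p 1 ≤ 1 + d 1 := hple 1 (by omega)
    rw [hp0] at h1
    rw [hd1] at h1 hp1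
    nlinarith
  exact ⟨le_antisymm (csSup_le ⟨_, hmem⟩ hub) (le_csSup ⟨_, hub⟩ hmem), hmem⟩
end

section
/- Let $\widehat\alpha,\widetilde\alpha$ be nonnegative random variables with joint density (in the high-SNR exponent sense) $p(\widehat\alpha,\widetilde\alpha)=\mathrm{SNR}^{-\widehat\alpha-\widetilde\alpha}$ on $[0,\infty)^2$. For $0<r<1$, define $A=\{(\widehat\alpha,\widetilde\alpha):\widehat\alpha\ge 0,\widetilde\alpha\ge 0,\ (2-\widehat\alpha-(1-\widetilde\alpha)^+)^+<r,\ (2-\widehat\alpha)^+\ge r,\ (1-\widehat\alpha)^+<r\}$. Then $\inf_{(\widehat\alpha,\widetilde\alpha)\in A}(\widehat\alpha+\widetilde\alpha)\le 1-r$; in fact $\inf_{(\widehat\alpha,\widetilde\alpha)\in A}(\widehat\alpha+\widetilde\alpha)=1-r$. -/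
/-- SISO constant-power training outage exponent: for `0 < r < 1`,
`inf { α̂ + α̃ : (α̂, α̃) ∈ A } = 1 - r`, where
`A = { α̂, α̃ ≥ 0 : (2-α̂-(1-α̃)⁺)⁺ < r, (2-α̂)⁺ ≥ r, (1-α̂)⁺ < r }`. -/
theorem stmt7 (r : ℝ) (hr0 : 0 < r) (hr1 : r < 1) :
    sInf { s : ℝ | ∃ ah at_ : ℝ, 0 ≤ ah ∧ 0 ≤ at_ ∧
        max (2 - ah - max (1 - at_) 0) 0 < r ∧ r ≤ max (2 - ah) 0 ∧
        max (1 - ah) 0 < r ∧ s = ah + at_ } ≤ 1 - r ∧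
    sInf { s : ℝ | ∃ ah at_ : ℝ, 0 ≤ ah ∧ 0 ≤ at_ ∧
        max (2 - ah - max (1 - at_) 0) 0 < r ∧ r ≤ max (2 - ah) 0 ∧
        max (1 - ah) 0 < r ∧ s = ah + at_ } = 1 - r := by
  set S := { s : ℝ | ∃ ah at_ : ℝ, 0 ≤ ah ∧ 0 ≤ at_ ∧
      max (2 - ah - max (1 - at_) 0) 0 < r ∧ r ≤ max (2 - ah) 0 ∧
      max (1 - ah) 0 < r ∧ s = ah + at_ } with hS
  have hne : S.Nonempty := by
    refine ⟨1, 1, 0, by norm_num, le_refl 0, ?_, ?_, ?_, by norm_num⟩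
    · norm_num [max_eq_right]; positivity
    · rw [show (2:ℝ) - 1 = 1 by norm_num, max_eq_left (by norm_num : (0:ℝ) ≤ 1)]
      linarith
    · norm_num; exact hr0
  have hlb : ∀ x ∈ S, 1 - r ≤ x := by
    rintro x ⟨ah, at_, hah, hat, _, _, h5, rfl⟩
    have : 1 - ah < r := lt_of_le_of_lt (le_max_left _ _) h5
    linarith
  have hbdd : BddBelow S := ⟨1 - r, hlb⟩
  have h1 : sInf S ≤ 1 - r := by
    rw [Real.sInf_le_iff hbdd hne]
    intro ε hε
    set ε' := min ε r with hε'
    have hε'0 : 0 < ε' := lt_min hε hr0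
    have hε'r : ε' ≤ r := min_le_right _ _
    have hε'ε : ε' ≤ ε := min_le_left _ _
    refine ⟨1 - r + ε' / 2, ⟨1 - r + ε' / 2, 0, by linarith, le_refl 0, ?_, ?_, ?_, by ring⟩,
      by linarith⟩
    · have h10 : max (1 - (0:ℝ)) 0 = 1 := by norm_num
      rw [h10]
      have : max (2 - (1 - r + ε' / 2) - 1) 0 = r - ε' / 2 := by
        rw [max_eq_left (by linarith : (0:ℝ) ≤ 2 - (1 - r + ε' / 2) - 1)]; ring
      rw [this]; linarith
    · refine le_trans ?_ (le_max_left _ _); linarith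
    · have : max (1 - (1 - r + ε' / 2)) 0 = r - ε' / 2 := by
        rw [max_eq_left (by linarith : (0:ℝ) ≤ 1 - (1 - r + ε' / 2))]; ring
      rw [this]; linarith
  have h2 : 1 - r ≤ sInf S := le_csInf hne hlb
  exact ⟨h1, le_antisymm h1 h2⟩
end
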